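/- Let I ⊆ ℝ be an open interval and f : I ∩ ℚ → ℝ a non-decreasing function satisfying the midpoint property, i.e. for all t, t' ∈ I ∩ ℚ one has (f(t)+f(t'))/2 ≥ f((t+t')/2). Then f extends to a continuous non-decreasing convex function g : I → ℝ. -/

import Mathlib

/-!
Midpoint convexity iterates to convexity with dyadic weights. Since `f` is non-decreasing, a dyadic
weight slightly above a real weight `a` can stand in for it, so `f q ≤ a f p + (1 - a) f r`
whenever `p < r` and `q < a p + (1 - a) r`. The extension `g x = sup {f q | q < x}` inherits this
inequality and is therefore convex, hence continuous on the open interval `I`; right-continuity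
of `g` at a rational `t` then gives `g t = f t`.
-/

open Set Filter Topology

def MidpointConvexOn (s : Set ℚ) (f : ℚ → ℝ) : Prop :=
  ∀ ⦃t⦄, t ∈ s → ∀ ⦃t'⦄, t' ∈ s → f ((t + t') / 2) ≤ (f t + f t') / 2

theorem exists_dyadic_mem_Ico {a b : ℝ} (ha₀ : 0 ≤ a) (ha₁ : a ≤ 1) (hab : a < b) :
    ∃ n k : ℕ, k ≤ 2 ^ n ∧ (k / 2 ^ n : ℝ) ∈ Ico a b := by
  obtain ⟨n, hn⟩ := exists_pow_lt_of_lt_one (sub_pos.2 hab) (by norm_num : (1 / 2 : ℝ) < 1)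
  have h2n : (0 : ℝ) < 2 ^ n := by positivity
  refine ⟨n, ⌈a * 2 ^ n⌉₊, ?_, ?_, ?_⟩
  · exact_mod_cast Nat.ceil_le.2 (by simpa using mul_le_mul_of_nonneg_right ha₁ h2n.le)
  · exact (le_div_iff₀ h2n).2 (Nat.le_ceil _)
  · rw [div_pow, one_pow, div_lt_iff₀ h2n] at hn
    rw [div_lt_iff₀ h2n]
    linarith [Nat.ceil_lt_add_one (by positivity : 0 ≤ a * 2 ^ n)]

theorem Convex.dyadic_combination_mem {s : Set ℚ} {p r : ℚ} (hs : Convex ℚ s) (hp : p ∈ s)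
    (hr : r ∈ s) {n k : ℕ} (hk : k ≤ 2 ^ n) : (k / 2 ^ n * p + (1 - k / 2 ^ n) * r : ℚ) ∈ s :=
  hs hp hr (by positivity)
    (sub_nonneg.2 <| div_le_one_of_le₀ (by exact_mod_cast hk) (by positivity)) (by ring)

namespace MidpointConvexOn

variable {s : Set ℚ} {f : ℚ → ℝ} {p r : ℚ}

theorem apply_dyadic_le (hs : Convex ℚ s) (hf : MidpointConvexOn s f) (hp : p ∈ s) (hr : r ∈ s)
    (n : ℕ) {k : ℕ} (hk : k ≤ 2 ^ n) :
    f (k / 2 ^ n * p + (1 - k / 2 ^ n) * r) ≤ (k / 2 ^ n : ℝ) * f p + (1 - k / 2 ^ n) * f r := by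
  induction n generalizing k with
  | zero => interval_cases k <;> simp
  | succ n ih =>
    rcases le_or_gt k (2 ^ n) with hkn | hkn
    · have key := hf (hs.dyadic_combination_mem hp hr hkn) hr
      rw [show (k / 2 ^ n * p + (1 - k / 2 ^ n) * r + r) / 2 =
          (k / 2 ^ (n + 1) * p + (1 - k / 2 ^ (n + 1)) * r : ℚ) by ring] at key
      calc _ ≤ _ := key
        _ ≤ ((k / 2 ^ n : ℝ) * f p + (1 - k / 2 ^ n) * f r + f r) / 2 := by linarith [ih hkn]
        _ = _ := by ring
    · obtain ⟨j, rfl⟩ := Nat.exists_eq_add_of_le hkn.le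
      have hj : j ≤ 2 ^ n := by rw [pow_succ] at hk; omega
      have key := hf hp (hs.dyadic_combination_mem hp hr hj)
      rw [show (p + (j / 2 ^ n * p + (1 - j / 2 ^ n) * r)) / 2 =
          (↑(2 ^ n + j) / 2 ^ (n + 1) * p + (1 - ↑(2 ^ n + j) / 2 ^ (n + 1)) * r : ℚ) by
        push_cast; field_simp; ring] at key
      calc _ ≤ _ := key
        _ ≤ (f p + ((j / 2 ^ n : ℝ) * f p + (1 - j / 2 ^ n) * f r)) / 2 := by linarith [ih hj]
        _ = _ := by push_cast; field_simp; ring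

theorem apply_le_combination (hs : Convex ℚ s) (hmono : MonotoneOn f s)
    (hf : MidpointConvexOn s f) {q : ℚ} (hp : p ∈ s) (hq : q ∈ s) (hr : r ∈ s) (hpr : p < r)
    {a : ℝ} (ha₀ : 0 ≤ a) (ha₁ : a ≤ 1) (hqa : (q : ℝ) < a * p + (1 - a) * r) :
    f q ≤ a * f p + (1 - a) * f r := by
  have hrp : (0 : ℝ) < r - p := by exact_mod_cast sub_pos.2 hpr
  obtain ⟨n, k, hk, had, hdμ⟩ :=
    exists_dyadic_mem_Ico ha₀ ha₁ (b := (r - q) / (r - p)) (by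
      rw [lt_div_iff₀ hrp]; linarith)
  rw [lt_div_iff₀ hrp] at hdμ
  have hq' : q ≤ k / 2 ^ n * p + (1 - k / 2 ^ n) * r := by
    rw [← Rat.cast_le (K := ℝ)]
    push_cast
    linarith
  have hfpr : f p ≤ f r := hmono hp hr hpr.le
  calc f q ≤ f (k / 2 ^ n * p + (1 - k / 2 ^ n) * r) :=
        hmono hq (hs.dyadic_combination_mem hp hr hk) hq'
    _ ≤ (k / 2 ^ n : ℝ) * f p + (1 - k / 2 ^ n) * f r := hf.apply_dyadic_le hs hp hr n hk
    _ ≤ a * f p + (1 - a) * f r := by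
        linarith [mul_le_mul_of_nonneg_left hfpr (sub_nonneg.2 had)]

end MidpointConvexOn

theorem IsOpen.exists_ratCast_mem_Ioo {I : Set ℝ} (hI : IsOpen I) {a x : ℝ} (hx : x ∈ I)
    (ha : a < x) : ∃ q : ℚ, (q : ℝ) ∈ I ∧ a < q ∧ (q : ℝ) < x := by
  have hne : (Ioo a x ∩ I).Nonempty :=
    nonempty_of_mem <| inter_mem (Ioo_mem_nhdsLT ha) (mem_nhdsWithin_of_mem_nhds (hI.mem_nhds hx))
  obtain ⟨q, ⟨haq, hqx⟩, hq⟩ := Rat.denseRange_cast.exists_mem_open (isOpen_Ioo.inter hI) hne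
  exact ⟨q, hq, haq, hqx⟩

theorem IsOpen.exists_ratCast_mem_Ioi {I : Set ℝ} (hI : IsOpen I) {x : ℝ} (hx : x ∈ I) :
    ∃ q : ℚ, (q : ℝ) ∈ I ∧ x < q := by
  have hne : (Ioi x ∩ I).Nonempty :=
    nonempty_of_mem <| inter_mem self_mem_nhdsWithin (mem_nhdsWithin_of_mem_nhds (hI.mem_nhds hx))
  obtain ⟨q, hxq, hq⟩ := Rat.denseRange_cast.exists_mem_open (isOpen_Ioi.inter hI) hne
  exact ⟨q, hq, hxq⟩

noncomputable def supBelow (f : ℚ → ℝ) (I : Set ℝ) (x : ℝ) : ℝ :=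
  sSup (f '' {q : ℚ | (q : ℝ) ∈ I ∧ (q : ℝ) < x})

section supBelow

variable {I : Set ℝ} {f : ℚ → ℝ} {x : ℝ}

theorem le_supBelow (hI : IsOpen I) (hmono : MonotoneOn f ((↑) ⁻¹' I)) (hx : x ∈ I) {q : ℚ}
    (hq : (q : ℝ) ∈ I) (hqx : (q : ℝ) < x) : f q ≤ supBelow f I x := by
  obtain ⟨r, hr, hxr⟩ := hI.exists_ratCast_mem_Ioi hx
  refine le_csSup ⟨f r, ?_⟩ ⟨q, ⟨hq, hqx⟩, rfl⟩
  rintro _ ⟨t, ⟨ht, htx⟩, rfl⟩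
  exact hmono ht hr (by exact_mod_cast (htx.trans hxr).le)

theorem supBelow_le (hI : IsOpen I) (hx : x ∈ I) {c : ℝ}
    (h : ∀ q : ℚ, (q : ℝ) ∈ I → (q : ℝ) < x → f q ≤ c) : supBelow f I x ≤ c := by
  obtain ⟨q, hq, -, hqx⟩ := hI.exists_ratCast_mem_Ioo hx (sub_one_lt x)
  refine csSup_le ⟨f q, q, ⟨hq, hqx⟩, rfl⟩ ?_
  rintro _ ⟨t, ⟨ht, htx⟩, rfl⟩
  exact h t ht htx

theorem monotoneOn_supBelow (hI : IsOpen I) (hmono : MonotoneOn f ((↑) ⁻¹' I)) :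
    MonotoneOn (supBelow f I) I := fun _ hx _ hy hxy =>
  supBelow_le hI hx fun _ hq hqx => le_supBelow hI hmono hy hq (hqx.trans_le hxy)

theorem convexOn_supBelow (hI : IsOpen I) (hIconn : I.OrdConnected)
    (hmono : MonotoneOn f ((↑) ⁻¹' I)) (hf : MidpointConvexOn ((↑) ⁻¹' I) f) :
    ConvexOn ℝ I (supBelow f I) := by
  refine LinearOrder.convexOn_of_lt hIconn.convex fun x hx y hy hxy a b ha hb hab => ?_
  obtain rfl : b = 1 - a := by linarith
  refine supBelow_le hI (hIconn.convex hx hy ha.le hb.le hab) fun q hq hqz => ?_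
  simp only [smul_eq_mul] at hqz ⊢
  set δ := a * x + (1 - a) * y - q
  obtain ⟨p, hp, hxp, hpx⟩ := hI.exists_ratCast_mem_Ioo hx (a := x - δ) (by linarith)
  obtain ⟨r, hr, hyr, hry⟩ :=
    hI.exists_ratCast_mem_Ioo hy (a := max x (y - δ)) (max_lt hxy (by linarith))
  have hpr : p < r := by exact_mod_cast hpx.trans ((le_max_left _ _).trans_lt hyr)
  have hqpr : (q : ℝ) < a * p + (1 - a) * r := by
    linarith [mul_lt_mul_of_pos_left hxp ha,
      mul_lt_mul_of_pos_left ((le_max_right _ _).trans_lt hyr) hb]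
  calc f q ≤ a * f p + (1 - a) * f r :=
        hf.apply_le_combination (hIconn.preimage_mono Rat.cast_mono).convex hmono hp hq hr hpr
          ha.le (by linarith) hqpr
    _ ≤ a * supBelow f I x + (1 - a) * supBelow f I y := by
        gcongr
        · exact le_supBelow hI hmono hx hp hpx
        · exact le_supBelow hI hmono hy hr hry

theorem supBelow_ratCast (hI : IsOpen I) (hmono : MonotoneOn f ((↑) ⁻¹' I))
    (hcont : ContinuousOn (supBelow f I) I) {t : ℚ} (ht : (t : ℝ) ∈ I) :
    supBelow f I t = f t := by
  refine le_antisymm (supBelow_le hI ht fun q hq hqt => hmono hq ht (by exact_mod_cast hqt.le)) ?_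
  have hlim : Tendsto (supBelow f I) (𝓝[>] (t : ℝ)) (𝓝 (supBelow f I t)) :=
    (hcont.continuousAt (hI.mem_nhds ht)).tendsto.mono_left nhdsWithin_le_nhds
  refine ge_of_tendsto hlim ?_
  filter_upwards [self_mem_nhdsWithin, mem_nhdsWithin_of_mem_nhds (hI.mem_nhds ht)] with y hty hy
  exact le_supBelow hI hmono hy ht hty

end supBelow

/-- **Extension of a midpoint-convex monotone function on rational points of an open
interval to a continuous, non-decreasing, convex function.**
`I ⊆ ℝ` is an open interval (open and order-connected), `f : ℚ → ℝ` is non-decreasing on the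
rational points of `I` and satisfies the midpoint property there.  Then there is a function
`g : ℝ → ℝ`, continuous, non-decreasing and convex on `I`, extending `f`. -/
theorem midpoint_extension (I : Set ℝ) (hIopen : IsOpen I) (hIconn : I.OrdConnected)
    (f : ℚ → ℝ)
    (hmono : ∀ t t' : ℚ, (t : ℝ) ∈ I → (t' : ℝ) ∈ I → t ≤ t' → f t ≤ f t')
    (hmid : ∀ t t' : ℚ, (t : ℝ) ∈ I → (t' : ℝ) ∈ I →
      f ((t + t') / 2) ≤ (f t + f t') / 2) :
    ∃ g : ℝ → ℝ, ContinuousOn g I ∧ MonotoneOn g I ∧ ConvexOn ℝ I g ∧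
      ∀ t : ℚ, (t : ℝ) ∈ I → g t = f t := by
  have hf_mono : MonotoneOn f ((↑) ⁻¹' I) := fun t ht t' ht' => hmono t t' ht ht'
  have hf_mid : MidpointConvexOn ((↑) ⁻¹' I) f := fun t ht t' ht' => hmid t t' ht ht'
  have hconv := convexOn_supBelow hIopen hIconn hf_mono hf_mid
  have hcont := hconv.continuousOn hIopen
  exact ⟨supBelow f I, hcont, monotoneOn_supBelow hIopen hf_mono, hconv,
    fun t ht => supBelow_ratCast hIopen hf_mono hcont ht⟩
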